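/- Let s > 1. Then for every y > 0 the function ψ_s is twice differentiable at y and −ψ_s''(y) + ψ_s(y) = ((2s−1)/(2(s−1))) · ψ_{s−1}(y). -/

import Mathlib

open MeasureTheory Real Filter Set

/-- The modified Bessel function of the second kind, for `y > 0` given by
`K_s(y) = ∫_0^∞ e^{−y·cosh t}·cosh(s·t) dt`. -/
noncomputable def besselK (s y : ℝ) : ℝ :=
  ∫ t in Set.Ioi (0 : ℝ), Real.exp (-(y * Real.cosh t)) * Real.cosh (s * t)

/-- `ψ_s(y) = (2^{1−s}/Γ(s))·|y|^s·K_s(|y|)` for `y ≠ 0`, and `ψ_s(0) = 1`. -/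
noncomputable def psi (s : ℝ) (y : ℝ) : ℝ :=
  if y = 0 then 1
  else (2 : ℝ) ^ (1 - s) / Real.Gamma s * |y| ^ s * besselK s |y|

/-!
Differentiating under the integral sign and the product formula
`2 cosh t cosh νt = cosh (ν+1)t + cosh (ν-1)t` give `K_ν' = -(K_{ν+1} + K_{ν-1})/2`, while
integrating `e^{-y cosh t} sinh νt` by parts gives `y (K_{ν+1} - K_{ν-1}) = 2ν K_ν`.
Together they yield `(y^ν K_ν)' = -y^ν K_{ν-1}`, so `ψ_s' = -c_s y^s K_{s-1}`, and one more
differentiation gives `ψ_s'' = ψ_s - (2s-1) c_s y^{s-1} K_{s-1}` with `c_s = 2^{1-s}/Γ(s)`;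
finally `c_{s-1} = 2(s-1) c_s` by `Γ(s) = (s-1) Γ(s-1)`.
-/

open Topology

lemma abs_sinh_le_cosh (x : ℝ) : |sinh x| ≤ cosh x := by
  rw [abs_sinh, ← cosh_abs]
  linarith [cosh_sub_sinh |x|, exp_pos (-|x|)]

lemma cosh_le_exp_abs (x : ℝ) : cosh x ≤ exp |x| := by
  rw [← cosh_abs, cosh_eq]
  linarith [exp_le_exp.2 (show -|x| ≤ |x| by linarith [abs_nonneg x])]

lemma exp_neg_mul_cosh_mul_cosh_le {y : ℝ} (hy : 0 < y) (ν t : ℝ) :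
    exp (-(y * cosh t)) * cosh (ν * t) ≤ exp ((|ν| + 1) ^ 2 / y) * exp (-|t|) := by
  have hcosh_lower : exp |t| / 2 ≤ cosh t := by rw [cosh_eq]; linarith [exp_abs_le t]
  have hexp := quadratic_le_exp_of_nonneg (abs_nonneg t)
  -- `cosh t ≥ t²/4` beats the linear growth of the exponent `(|ν| + 1) |t|`
  have hquad : y * (y * |t| ^ 2 / 4) ≤ y * (y * cosh t) := by
    gcongr; nlinarith [abs_nonneg t]
  have hexponent : -(y * cosh t) + |ν| * |t| ≤ (|ν| + 1) ^ 2 / y + -|t| := by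
    rw [le_add_neg_iff_add_le, le_div_iff₀ hy]
    nlinarith [sq_nonneg (y * |t| - 2 * (|ν| + 1))]
  calc exp (-(y * cosh t)) * cosh (ν * t)
      ≤ exp (-(y * cosh t)) * exp (|ν| * |t|) := by
        gcongr; simpa [abs_mul] using cosh_le_exp_abs (ν * t)
    _ = exp (-(y * cosh t) + |ν| * |t|) := (exp_add _ _).symm
    _ ≤ exp ((|ν| + 1) ^ 2 / y + -|t|) := exp_le_exp.2 hexponent
    _ = exp ((|ν| + 1) ^ 2 / y) * exp (-|t|) := exp_add _ _

lemma integrableOn_exp_neg_mul_cosh_mul_cosh {y : ℝ} (hy : 0 < y) (ν : ℝ) :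
    IntegrableOn (fun t => exp (-(y * cosh t)) * cosh (ν * t)) (Ioi 0) := by
  refine Integrable.mono' ((exp_neg_integrableOn_Ioi 0 one_pos).const_mul
    (exp ((|ν| + 1) ^ 2 / y))) (by fun_prop) ?_
  filter_upwards [ae_restrict_mem measurableSet_Ioi] with t ht
  rw [norm_of_nonneg (by positivity)]
  simpa [abs_of_pos (mem_Ioi.1 ht)] using exp_neg_mul_cosh_mul_cosh_le hy ν t

lemma tendsto_exp_neg_mul_cosh_mul_cosh_atTop {y : ℝ} (hy : 0 < y) (ν : ℝ) :
    Tendsto (fun t => exp (-(y * cosh t)) * cosh (ν * t)) atTop (𝓝 0) := by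
  refine squeeze_zero' (.of_forall fun t => by positivity) ?_
    (by simpa using tendsto_exp_neg_atTop_nhds_zero.const_mul (exp ((|ν| + 1) ^ 2 / y)))
  filter_upwards [eventually_ge_atTop 0] with t ht
  simpa [abs_of_nonneg ht] using exp_neg_mul_cosh_mul_cosh_le hy ν t

lemma cosh_add_one_mul_add_cosh_sub_one_mul (ν t : ℝ) :
    cosh ((ν + 1) * t) + cosh ((ν - 1) * t) = 2 * (cosh t * cosh (ν * t)) := by
  rw [add_mul, sub_mul, one_mul, cosh_add, cosh_sub]; ring

lemma cosh_add_one_mul_sub_cosh_sub_one_mul (ν t : ℝ) :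
    cosh ((ν + 1) * t) - cosh ((ν - 1) * t) = 2 * (sinh t * sinh (ν * t)) := by
  rw [add_mul, sub_mul, one_mul, cosh_add, cosh_sub]; ring

lemma hasDerivAt_besselK (ν : ℝ) {y : ℝ} (hy : 0 < y) :
    HasDerivAt (besselK ν) (-(besselK (ν + 1) y + besselK (ν - 1) y) / 2) y := by
  set F' : ℝ → ℝ → ℝ := fun x t =>
    -(exp (-(x * cosh t)) * cosh ((ν + 1) * t) + exp (-(x * cosh t)) * cosh ((ν - 1) * t)) / 2
  have hint (x : ℝ) (hx : 0 < x) (μ : ℝ) := integrableOn_exp_neg_mul_cosh_mul_cosh hx μ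
  have hdom := hasDerivAt_integral_of_dominated_loc_of_deriv_le (μ := volume.restrict (Ioi 0))
    (F := fun x t => exp (-(x * cosh t)) * cosh (ν * t)) (F' := F')
    (bound := fun t => -F' (y / 2) t) (Metric.ball_mem_nhds y (half_pos hy))
    (.of_forall fun x => by fun_prop) (hint y hy ν) (by fun_prop) ?bound
    ((((hint _ (half_pos hy) (ν + 1)).add (hint _ (half_pos hy) (ν - 1))).div_const 2).congr
      (.of_forall fun t => by simp only [F', Pi.add_apply, neg_div, neg_neg])) ?deriv
  case bound =>
    filter_upwards with t x hx
    have hx' : y / 2 ≤ x := by linarith [(abs_lt.1 (mem_ball_iff_norm.1 hx)).1]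
    have hmono : exp (-(x * cosh t)) ≤ exp (-(y / 2 * cosh t)) :=
      exp_le_exp.2 (by nlinarith [one_le_cosh t])
    simp only [F', norm_div, norm_neg, Real.norm_two, neg_div, neg_neg]
    rw [norm_of_nonneg (by positivity)]
    gcongr
  case deriv =>
    filter_upwards with t x _
    refine (((hasDerivAt_mul_const (cosh t)).neg.exp).mul_const (cosh (ν * t))).congr_deriv ?_
    simp only [F']
    linear_combination (exp (-(x * cosh t)) / 2) * cosh_add_one_mul_add_cosh_sub_one_mul ν t
  refine hdom.2.congr_deriv ?_
  simp only [F', integral_div, integral_neg]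
  rw [integral_add (hint y hy (ν + 1)) (hint y hy (ν - 1))]
  rfl

lemma mul_besselK_add_one_sub_besselK_sub_one (ν : ℝ) {y : ℝ} (hy : 0 < y) :
    y * (besselK (ν + 1) y - besselK (ν - 1) y) = 2 * ν * besselK ν y := by
  have hint (μ : ℝ) := integrableOn_exp_neg_mul_cosh_mul_cosh hy μ
  set f' : ℝ → ℝ := fun t => ν * (exp (-(y * cosh t)) * cosh (ν * t))
    - y / 2 * (exp (-(y * cosh t)) * cosh ((ν + 1) * t)
      - exp (-(y * cosh t)) * cosh ((ν - 1) * t))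
  have hderiv (t : ℝ) (_ : t ∈ Ici (0 : ℝ)) :
      HasDerivAt (fun t => exp (-(y * cosh t)) * sinh (ν * t)) (f' t) t := by
    refine (((hasDerivAt_cosh t).const_mul y).fun_neg.exp.mul
      ((hasDerivAt_id t).const_mul ν).sinh).congr_deriv ?_
    simp only [f', id]
    linear_combination (y / 2 * exp (-(y * cosh t))) *
      cosh_add_one_mul_sub_cosh_sub_one_mul ν t
  have hlim : Tendsto (fun t => exp (-(y * cosh t)) * sinh (ν * t)) atTop (𝓝 0) :=
    squeeze_zero_norm (fun t => by
      rw [norm_mul, norm_of_nonneg (exp_pos _).le, Real.norm_eq_abs]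
      exact mul_le_mul_of_nonneg_left (abs_sinh_le_cosh _) (exp_pos _).le)
      (tendsto_exp_neg_mul_cosh_mul_cosh_atTop hy ν)
  have hint_diff : IntegrableOn (fun t => exp (-(y * cosh t)) * cosh ((ν + 1) * t)
      - exp (-(y * cosh t)) * cosh ((ν - 1) * t)) (Ioi 0) := (hint _).sub (hint _)
  have hint_f' : IntegrableOn f' (Ioi 0) := ((hint ν).const_mul ν).sub (hint_diff.const_mul _)
  have hibp := integral_Ioi_of_hasDerivAt_of_tendsto' hderiv hint_f' hlim
  simp only [f', mul_zero, sinh_zero, sub_zero] at hibp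
  rw [integral_sub ((hint ν).const_mul ν) (hint_diff.const_mul _), integral_const_mul,
    integral_const_mul, integral_sub (hint _) (hint _)] at hibp
  change ν * besselK ν y - y / 2 * (besselK (ν + 1) y - besselK (ν - 1) y) = 0 at hibp
  linarith

lemma hasDerivAt_rpow_mul_besselK (ν : ℝ) {y : ℝ} (hy : 0 < y) :
    HasDerivAt (fun z => z ^ ν * besselK ν z) (-(y ^ ν * besselK (ν - 1) y)) y := by
  refine ((hasDerivAt_rpow_const (Or.inl hy.ne')).mul (hasDerivAt_besselK ν hy)).congr_deriv ?_
  have hrec : besselK (ν + 1) y = besselK (ν - 1) y + 2 * ν * besselK ν y / y := by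
    field_simp; linarith [mul_besselK_add_one_sub_besselK_sub_one ν hy]
  rw [rpow_sub_one hy.ne', hrec]
  ring

lemma psi_eq_of_pos (s : ℝ) {y : ℝ} (hy : 0 < y) :
    psi s y = 2 ^ (1 - s) / Gamma s * (y ^ s * besselK s y) := by
  rw [psi, if_neg hy.ne', abs_of_pos hy, mul_assoc]

lemma psi_eventuallyEq (s : ℝ) {y : ℝ} (hy : 0 < y) :
    psi s =ᶠ[𝓝 y] fun z => 2 ^ (1 - s) / Gamma s * (z ^ s * besselK s z) :=
  eventually_of_mem (Ioi_mem_nhds hy) fun _ hz => psi_eq_of_pos s hz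

lemma hasDerivAt_psi (s : ℝ) {y : ℝ} (hy : 0 < y) :
    HasDerivAt (psi s) (-(2 ^ (1 - s) / Gamma s * (y ^ s * besselK (s - 1) y))) y := by
  rw [← mul_neg]
  exact ((hasDerivAt_rpow_mul_besselK s hy).const_mul _).congr_of_eventuallyEq
    (psi_eventuallyEq s hy)

lemma hasDerivAt_deriv_psi (s : ℝ) {y : ℝ} (hy : 0 < y) :
    HasDerivAt (deriv (psi s)) (2 ^ (1 - s) / Gamma s *
      (y ^ s * besselK s y - (2 * s - 1) * (y ^ (s - 1) * besselK (s - 1) y))) y := by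
  have hderiv : deriv (psi s) =ᶠ[𝓝 y]
      fun z => -(2 ^ (1 - s) / Gamma s * (z ^ s * besselK (s - 1) z)) :=
    eventually_of_mem (Ioi_mem_nhds hy) fun _ hz => (hasDerivAt_psi s hz).deriv
  refine (((hasDerivAt_rpow_const (Or.inl hy.ne')).mul
    (hasDerivAt_besselK (s - 1) hy)).const_mul _).neg.congr_of_eventuallyEq hderiv
    |>.congr_deriv ?_
  have hrec := mul_besselK_add_one_sub_besselK_sub_one (s - 1) hy
  rw [sub_add_cancel] at hrec ⊢
  rw [show y ^ s = y ^ (s - 1) * y by rw [← rpow_add_one hy.ne', sub_add_cancel]]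
  linear_combination -(2 ^ (1 - s) / Gamma s * y ^ (s - 1) / 2) * hrec

lemma two_rpow_div_Gamma_sub_one {s : ℝ} (hs : s ≠ 1) :
    2 ^ (1 - (s - 1)) / Gamma (s - 1) = 2 * (s - 1) * (2 ^ (1 - s) / Gamma s) := by
  have hΓ : Gamma s = (s - 1) * Gamma (s - 1) := by
    simpa using Gamma_add_one (sub_ne_zero.2 hs)
  rw [show 1 - (s - 1) = (1 - s) + 1 by ring, rpow_add_one two_ne_zero, hΓ]
  field_simp [sub_ne_zero.2 hs]

/-- for `s > 1`, for every `y > 0` `ψ_s` is twice differentiable at `y` and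
`−ψ_s''(y) + ψ_s(y) = ((2s−1)/(2(s−1)))·ψ_{s−1}(y)`. -/
theorem psi_second_order_eq_of_one_lt (s : ℝ) (hs : 1 < s) :
    ∀ y : ℝ, 0 < y →
      DifferentiableAt ℝ (psi s) y ∧
      DifferentiableAt ℝ (deriv (psi s)) y ∧
      -(deriv (deriv (psi s)) y) + psi s y
        = (2 * s - 1) / (2 * (s - 1)) * psi (s - 1) y := by
  intro y hy
  have hderiv2 := hasDerivAt_deriv_psi s hy
  refine ⟨(hasDerivAt_psi s hy).differentiableAt, hderiv2.differentiableAt, ?_⟩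
  rw [hderiv2.deriv, psi_eq_of_pos s hy, psi_eq_of_pos (s - 1) hy, two_rpow_div_Gamma_sub_one hs.ne']
  field_simp [sub_ne_zero.2 hs.ne']
  ring
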